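/- Let r ≥ 2 and let F be an r-graph such that every (r−1)-element subset of the vertex set of F is contained in at least one edge of F (i.e., δ_{r−1}(F) > 0). Then the limit lim_{n→∞} co⁺ex(n, F)/n exists. -/

import Mathlib

open Finset

/-- The co-degree of a vertex set `S` in the hypergraph with edge set `E`:
the number of edges containing `S`. -/
def coDeg {n : ℕ} (E : Finset (Finset (Fin n))) (S : Finset (Fin n)) : ℕ :=
  (E.filter (fun e => S ⊆ e)).card

/-- The minimum positive co-degree `δ⁺_{r-1}` of an `r`-graph on `Fin n` with edge set `E`:
the largest `k` such that every `(r-1)`-set of vertices contained in at least one edge is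
contained in at least `k` edges (i.e. the minimum of the positive co-degrees). -/
noncomputable def minPosCoDeg (r n : ℕ) (E : Finset (Finset (Fin n))) : ℕ :=
  sInf {d : ℕ | ∃ S : Finset (Fin n), S.card = r - 1 ∧ coDeg E S = d ∧ 0 < d}

/-- `E` contains a copy of `F`: an injection of the vertices of `F` mapping
edges of `F` to edges of `E`. -/
def Contains {α β : Type*} [DecidableEq α] [DecidableEq β]
    (F : Finset (Finset α)) (E : Finset (Finset β)) : Prop :=
  ∃ f : α → β, Function.Injective f ∧ ∀ e ∈ F, e.image f ∈ E

/-- The positive co-degree Turán number `co⁺ex_r(n, F)`: the maximum of the minimum positive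
co-degree over all `F`-free `r`-graphs on `n` vertices with at least one edge. -/
noncomputable def coPlusEx {α : Type*} [DecidableEq α] (r n : ℕ) (F : Finset (Finset α)) : ℕ :=
  sSup {d : ℕ | ∃ E : Finset (Finset (Fin n)),
    (∀ e ∈ E, e.card = r) ∧ E.Nonempty ∧ ¬ Contains F E ∧ minPosCoDeg r n E = d}

def K4minus : Finset (Finset (Fin 4)) := {{0,1,2}, {0,1,3}, {0,2,3}}

def K4 : Finset (Finset (Fin 4)) := {{0,1,2}, {0,1,3}, {0,2,3}, {1,2,3}}

def F5 : Finset (Finset (Fin 5)) := {{0,1,2}, {0,1,3}, {2,3,4}}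

def F32 : Finset (Finset (Fin 5)) := {{0,1,2}, {0,3,4}, {1,3,4}, {2,3,4}}

def Fano : Finset (Finset (Fin 7)) :=
  {{0,1,2}, {2,3,4}, {0,4,5}, {1,3,5}, {0,3,6}, {1,4,6}, {2,5,6}}

def F33 : Finset (Finset (Fin 6)) :=
  {{0,1,2}, {0,3,4}, {0,3,5}, {0,4,5}, {1,3,4}, {1,3,5}, {1,4,5}, {2,3,4}, {2,3,5}, {2,4,5}}

def C5 : Finset (Finset (Fin 5)) := {{0,1,2}, {1,2,3}, {2,3,4}, {0,3,4}, {0,1,4}}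

def C5minus : Finset (Finset (Fin 5)) := {{0,1,2}, {1,2,3}, {2,3,4}, {0,3,4}}

def K222 : Finset (Finset (Fin 6)) :=
  {{0,2,4}, {0,2,5}, {0,3,4}, {0,3,5}, {1,2,4}, {1,2,5}, {1,3,4}, {1,3,5}}

/-- `J k`: the 3-graph on `k+1` vertices whose edges are all triples containing the
distinguished vertex `0`. -/
def Jgraph (k : ℕ) : Finset (Finset (Fin (k+1))) :=
  (Finset.univ.powersetCard 3).filter (fun e => (0 : Fin (k+1)) ∈ e)

/-- `E` is (isomorphic to) the complete balanced `k`-partite 3-graph on `n` vertices: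
there is a partition of the vertices into `k` classes whose sizes differ by at most one,
such that the edges are exactly the triples of vertices in three pairwise distinct classes. -/
def IsCompleteBalancedMultipartite (n k : ℕ) (E : Finset (Finset (Fin n))) : Prop :=
  ∃ f : Fin n → Fin k,
    (∀ i j : Fin k, (Finset.univ.filter (fun v => f v = i)).card ≤
      (Finset.univ.filter (fun v => f v = j)).card + 1) ∧
    ∀ e : Finset (Fin n), e ∈ E ↔ (e.card = 3 ∧ (e.image f).card = 3)

/-- The unique (6,3,2)-design `H₆`. -/
def H6 : Finset (Finset (Fin 6)) :=
  {{0,1,2}, {0,1,3}, {2,3,4}, {2,3,5}, {0,4,5}, {1,4,5}, {0,2,4}, {0,3,5}, {1,2,5}, {1,3,4}}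

/-- `E` is (isomorphic to) a balanced blow-up of `H₆` on `n` vertices: the vertices are
partitioned into six classes of equal size, and the edges are exactly the triples whose
three vertices lie in classes forming an edge of `H₆`. -/
def IsBalancedH6Blowup (n : ℕ) (E : Finset (Finset (Fin n))) : Prop :=
  ∃ f : Fin n → Fin 6,
    (∀ i j : Fin 6, (Finset.univ.filter (fun v => f v = i)).card =
      (Finset.univ.filter (fun v => f v = j)).card) ∧
    ∀ e : Finset (Fin n), e ∈ E ↔ (e.card = 3 ∧ e.image f ∈ H6)

/-!
For `r ≥ 3` every two vertices of `F` lie in a common edge, so replacing each vertex of an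
`F`-free `r`-graph by `t` independent copies keeps it `F`-free and multiplies every positive
co-degree by `t`. Hence `a n := co⁺ex(n, F)` satisfies `⌊N / n⌋ * a n ≤ a N`, which together with
`a n ≤ n` forces `a n / n` to converge to `sup_n a n / n`.

For `r = 2` blow-ups can create copies of `F`; instead `co⁺ex(n, F) / n → 1 - 1 / k`, where
`k + 1` is the chromatic number of `F`. The Turán graph `T(n, k)` gives the lower bound, and the
minimum-degree Erdős–Stone theorem, applied to the non-isolated vertices of an extremal graph,
gives the upper bound.
-/

open Filter Topology

section Codegree

variable {n r : ℕ} {E : Finset (Finset (Fin n))}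

theorem coDeg_eq_card_filter_insert {S : Finset (Fin n)} (hE : ∀ e ∈ E, e.card = S.card + 1) :
    coDeg E S = #{y | y ∉ S ∧ insert y S ∈ E} := by
  refine (card_bij (fun y _ => insert y S) ?_ ?_ ?_).symm
  · intro y hy
    simp only [mem_filter, mem_univ, true_and] at hy ⊢
    exact ⟨hy.2, subset_insert y S⟩
  · intro y hy y' _ h
    exact (insert_inj (mem_filter.1 hy).2.1).1 h
  · intro e he
    obtain ⟨heE, hSe⟩ := mem_filter.1 he
    obtain ⟨y, hyS, rfl⟩ := exists_eq_insert_iff.2 ⟨hSe, (hE e heE).symm⟩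
    exact ⟨y, by simp [hyS, heE], rfl⟩

theorem coDeg_le_of_card_eq_succ {S : Finset (Fin n)} (hE : ∀ e ∈ E, e.card = S.card + 1) :
    coDeg E S ≤ n := by
  rw [coDeg_eq_card_filter_insert hE]
  exact (card_le_univ _).trans_eq (Fintype.card_fin n)

theorem minPosCoDeg_le_coDeg {S : Finset (Fin n)} (hS : S.card = r - 1) (hpos : 0 < coDeg E S) :
    minPosCoDeg r n E ≤ coDeg E S :=
  Nat.sInf_le ⟨S, hS, rfl, hpos⟩

theorem le_minPosCoDeg {b : ℕ} (hE : ∀ e ∈ E, e.card = r) (hne : E.Nonempty)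
    (h : ∀ S : Finset (Fin n), S.card = r - 1 → 0 < coDeg E S → b ≤ coDeg E S) :
    b ≤ minPosCoDeg r n E := by
  obtain ⟨e, he⟩ := hne
  obtain ⟨S, hSe, hS⟩ := exists_subset_card_eq (show r - 1 ≤ e.card by rw [hE e he]; omega)
  have hpos : 0 < coDeg E S := card_pos.2 ⟨e, mem_filter.2 ⟨he, hSe⟩⟩
  refine le_csInf ⟨_, S, hS, rfl, hpos⟩ ?_
  rintro _ ⟨S', hS', rfl, hpos'⟩
  exact h S' hS' hpos'

theorem minPosCoDeg_le (hr : 1 ≤ r) (hE : ∀ e ∈ E, e.card = r) : minPosCoDeg r n E ≤ n := by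
  rcases Set.eq_empty_or_nonempty
      {d | ∃ S : Finset (Fin n), S.card = r - 1 ∧ coDeg E S = d ∧ 0 < d} with h | h
  · rw [minPosCoDeg, h, Nat.sInf_empty]
    exact n.zero_le
  · obtain ⟨S, hS, hd, -⟩ := Nat.sInf_mem h
    rw [minPosCoDeg, ← hd]
    exact coDeg_le_of_card_eq_succ fun e he => by rw [hE e he, hS]; omega

end Codegree

section CoPlusEx

variable {α : Type*} [DecidableEq α] {r n : ℕ} {F : Finset (Finset α)}

theorem bddAbove_coPlusEx_set (hr : 1 ≤ r) :
    BddAbove {d : ℕ | ∃ E : Finset (Finset (Fin n)),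
      (∀ e ∈ E, e.card = r) ∧ E.Nonempty ∧ ¬ Contains F E ∧ minPosCoDeg r n E = d} := by
  refine ⟨n, ?_⟩
  rintro _ ⟨E, hE, -, -, rfl⟩
  exact minPosCoDeg_le hr hE

theorem exists_minPosCoDeg_eq_coPlusEx (hr : 1 ≤ r) (hpos : 0 < coPlusEx r n F) :
    ∃ E : Finset (Finset (Fin n)), (∀ e ∈ E, e.card = r) ∧ E.Nonempty ∧ ¬ Contains F E ∧
      minPosCoDeg r n E = coPlusEx r n F := by
  rcases Set.eq_empty_or_nonempty {d : ℕ | ∃ E : Finset (Finset (Fin n)),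
      (∀ e ∈ E, e.card = r) ∧ E.Nonempty ∧ ¬ Contains F E ∧ minPosCoDeg r n E = d} with h | h
  · rw [coPlusEx, h, csSup_empty] at hpos
    exact absurd hpos (lt_irrefl 0)
  · exact Nat.sSup_mem h (bddAbove_coPlusEx_set hr)

theorem coPlusEx_le (hr : 1 ≤ r) : coPlusEx r n F ≤ n := by
  rcases (coPlusEx r n F).eq_zero_or_pos with h | h
  · exact h ▸ n.zero_le
  · obtain ⟨E, hE, -, -, hd⟩ := exists_minPosCoDeg_eq_coPlusEx hr h
    exact hd ▸ minPosCoDeg_le hr hE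

theorem minPosCoDeg_le_coPlusEx (hr : 1 ≤ r) {E : Finset (Finset (Fin n))}
    (hE : ∀ e ∈ E, e.card = r) (hne : E.Nonempty) (hfree : ¬ Contains F E) :
    minPosCoDeg r n E ≤ coPlusEx r n F :=
  le_csSup (bddAbove_coPlusEx_set hr) ⟨E, hE, hne, hfree, rfl⟩

theorem coPlusEx_empty [Fintype α] (hn : Fintype.card α ≤ n) :
    coPlusEx r n (∅ : Finset (Finset α)) = 0 := by
  obtain ⟨f⟩ := Function.Embedding.nonempty_of_card_le (hn.trans_eq (Fintype.card_fin n).symm)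
  have hcontains (E : Finset (Finset (Fin n))) : Contains (∅ : Finset (Finset α)) E :=
    ⟨f, f.injective, by simp⟩
  simp [coPlusEx, hcontains]

end CoPlusEx

theorem div_sub_div_le_of_div_mul_le {a : ℕ → ℕ} (hle : ∀ n, a n ≤ n)
    (h : ∀ n N, N / n * a n ≤ a N) (n : ℕ) {N : ℕ} (hN : 0 < N) :
    (a n : ℝ) / n - n / N ≤ a N / N := by
  rcases n.eq_zero_or_pos with rfl | hn
  · simp only [CharP.cast_eq_zero, div_zero, zero_div, sub_zero]
    positivity
  have hfloor : (N : ℝ) / n - 1 ≤ ((N / n : ℕ) : ℝ) := by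
    rw [← Nat.floor_div_eq_div (K := ℝ)]
    exact (Nat.sub_one_lt_floor _).le
  have hmul : ((N / n : ℕ) : ℝ) * a n ≤ a N := by exact_mod_cast h n N
  have han : (a n : ℝ) ≤ n := by exact_mod_cast hle n
  calc (a n : ℝ) / n - n / N ≤ a n / n - a n / N := by gcongr
    _ = ((N : ℝ) / n - 1) * a n / N := by field_simp
    _ ≤ ((N / n : ℕ) : ℝ) * a n / N := by gcongr
    _ ≤ a N / N := by gcongr

theorem exists_tendsto_div_of_div_mul_le {a : ℕ → ℕ} (hle : ∀ n, a n ≤ n)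
    (h : ∀ n N, N / n * a n ≤ a N) :
    ∃ L : ℝ, Tendsto (fun n : ℕ => (a n : ℝ) / n) atTop (𝓝 L) := by
  have hbdd : BddAbove (Set.range fun n : ℕ => (a n : ℝ) / n) :=
    ⟨1, Set.forall_mem_range.2 fun n => div_le_one_of_le₀ (by exact_mod_cast hle n) n.cast_nonneg⟩
  refine ⟨⨆ n : ℕ, (a n : ℝ) / n, tendsto_order.2 ⟨fun b hb => ?_,
    fun b hb => Eventually.of_forall fun N => (le_ciSup hbdd N).trans_lt hb⟩⟩
  obtain ⟨n, hn⟩ := exists_lt_of_lt_ciSup hb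
  have hlim : Tendsto (fun N : ℕ => (a n : ℝ) / n - n / N) atTop (𝓝 ((a n : ℝ) / n)) := by
    simpa using tendsto_const_nhds.sub (tendsto_const_div_atTop_nhds_zero_nat (n : ℝ))
  filter_upwards [hlim.eventually (lt_mem_nhds hn), eventually_gt_atTop 0] with N hb hN
  exact hb.trans_le (div_sub_div_le_of_div_mul_le hle h n hN)

section BlowUp

variable {β γ : Type*} [Fintype β] [DecidableEq γ]

/-- When every fibre of `f` has `t` elements, this is the `t`-blow-up of `E`. -/
def blowUp (r : ℕ) (f : β → γ) (E : Finset (Finset γ)) : Finset (Finset β) :=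
  {e ∈ univ.powersetCard r | e.image f ∈ E}

variable {r : ℕ} {f : β → γ} {E : Finset (Finset γ)}

theorem mem_blowUp {e : Finset β} : e ∈ blowUp r f E ↔ e.card = r ∧ e.image f ∈ E := by
  simp [blowUp]

theorem injOn_of_mem_blowUp (hE : ∀ e ∈ E, e.card = r) {e : Finset β} (he : e ∈ blowUp r f E) :
    Set.InjOn f e := by
  rw [mem_blowUp] at he
  exact injOn_of_card_image_eq (by rw [hE _ he.2, he.1])

theorem card_image_of_subset_mem_blowUp (hE : ∀ e ∈ E, e.card = r) {S e : Finset β}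
    (he : e ∈ blowUp r f E) (hSe : S ⊆ e) : (S.image f).card = S.card :=
  card_image_of_injOn ((injOn_of_mem_blowUp hE he).mono hSe)

theorem blowUp_nonempty [DecidableEq β] (hf : Function.Surjective f) (hE : ∀ e ∈ E, e.card = r)
    (hne : E.Nonempty) : (blowUp r f E).Nonempty := by
  obtain ⟨e, he⟩ := hne
  refine ⟨e.image (Function.surjInv hf), mem_blowUp.2 ⟨?_, ?_⟩⟩
  · rw [card_image_of_injective _ (Function.injective_surjInv hf), hE e he]
  · rwa [image_image, (Function.rightInverse_surjInv hf).comp_eq_id, image_id]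

theorem not_contains_blowUp [DecidableEq β] {α : Type*} [DecidableEq α] {F : Finset (Finset α)}
    (hF : ∀ u v, u ≠ v → ∃ e ∈ F, u ∈ e ∧ v ∈ e) (hE : ∀ e ∈ E, e.card = r)
    (hfree : ¬ Contains F E) : ¬ Contains F (blowUp r f E) := by
  rintro ⟨g, hg, hgF⟩
  refine hfree ⟨f ∘ g, fun u v huv => ?_, fun e he => ?_⟩
  · by_contra hne
    obtain ⟨e, he, hu, hv⟩ := hF u v hne
    exact hne <| hg <| injOn_of_mem_blowUp hE (hgF e he) (mem_image_of_mem g hu)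
      (mem_image_of_mem g hv) huv
  · rw [← image_image]
    exact (mem_blowUp.1 (hgF e he)).2

end BlowUp

section BlowUpCodegree

variable {N n r t : ℕ} {f : Fin N → Fin n} {E : Finset (Finset (Fin n))}

theorem mul_coDeg_le_coDeg_blowUp (hr : 1 ≤ r) (hE : ∀ e ∈ E, e.card = r)
    (hf : ∀ y, t ≤ #{x | f x = y}) {S e : Finset (Fin N)} (he : e ∈ blowUp r f E)
    (hSe : S ⊆ e) (hS : S.card = r - 1) :
    t * coDeg E (S.image f) ≤ coDeg (blowUp r f E) S := by
  have hSf : (S.image f).card = r - 1 := by rw [card_image_of_subset_mem_blowUp hE he hSe, hS]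
  rw [coDeg_eq_card_filter_insert fun e he => by rw [hE e he, hSf]; omega,
    coDeg_eq_card_filter_insert fun e he => by rw [(mem_blowUp.1 he).1, hS]; omega]
  set L := ({y | y ∉ S.image f ∧ insert y (S.image f) ∈ E} : Finset (Fin n))
  calc t * #L = ∑ y ∈ L, t := by rw [sum_const, smul_eq_mul, mul_comm]
    _ ≤ ∑ y ∈ L, #{x | f x = y} := sum_le_sum fun y _ => hf y
    _ = #{x | f x ∈ L} := sum_card_fiberwise_eq_card_filter _ _ _
    _ ≤ #{x | x ∉ S ∧ insert x S ∈ blowUp r f E} := by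
      refine card_le_card fun x hx => ?_
      simp only [L, mem_filter, mem_univ, true_and] at hx ⊢
      have hxS : x ∉ S := fun h => hx.1 (mem_image_of_mem f h)
      refine ⟨hxS, mem_blowUp.2 ⟨?_, ?_⟩⟩
      · rw [card_insert_of_notMem hxS, hS]; omega
      · rw [image_insert]; exact hx.2

theorem mul_minPosCoDeg_le_minPosCoDeg_blowUp (hr : 1 ≤ r) (hE : ∀ e ∈ E, e.card = r)
    (hf : ∀ y, t ≤ #{x | f x = y}) (hne : (blowUp r f E).Nonempty) :
    t * minPosCoDeg r n E ≤ minPosCoDeg r N (blowUp r f E) := by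
  refine le_minPosCoDeg (fun e he => (mem_blowUp.1 he).1) hne fun S hS hpos => ?_
  obtain ⟨e, he⟩ := card_pos.1 hpos
  obtain ⟨he, hSe⟩ := mem_filter.1 he
  have hSf : (S.image f).card = r - 1 := by rw [card_image_of_subset_mem_blowUp hE he hSe, hS]
  have hposf : 0 < coDeg E (S.image f) :=
    card_pos.2 ⟨e.image f, mem_filter.2 ⟨(mem_blowUp.1 he).2, image_subset_image hSe⟩⟩
  calc t * minPosCoDeg r n E ≤ t * coDeg E (S.image f) := by
        gcongr; exact minPosCoDeg_le_coDeg hSf hposf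
    _ ≤ coDeg (blowUp r f E) S := mul_coDeg_le_coDeg_blowUp hr hE hf he hSe hS

end BlowUpCodegree

theorem div_le_card_filter_ofNat_eq {N n : ℕ} [NeZero n] (y : Fin n) :
    N / n ≤ #{x : Fin N | Fin.ofNat n x = y} := by
  have hn : 0 < n := Nat.pos_of_neZero n
  have hlt (j : Fin (N / n)) : (y : ℕ) + j * n < N :=
    calc (y : ℕ) + j * n < (j + 1) * n := by rw [add_one_mul, add_comm]; omega
      _ ≤ N / n * n := Nat.mul_le_mul_right n j.isLt
      _ ≤ N := Nat.div_mul_le_self N n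
  calc N / n = #(univ : Finset (Fin (N / n))) := by simp
    _ ≤ _ := card_le_card_of_injOn (fun j => ⟨y + j * n, hlt j⟩)
        (fun j _ => by simp [Fin.ext_iff, Nat.mod_eq_of_lt y.isLt])
        (fun j _ j' _ h => Fin.ext <| Nat.eq_of_mul_eq_mul_right hn <| by
          simpa using congrArg Fin.val h)

theorem ofNat_surjective_of_le {N n : ℕ} [NeZero n] (h : n ≤ N) :
    Function.Surjective fun x : Fin N => Fin.ofNat n x :=
  fun y => ⟨⟨y, y.isLt.trans_le h⟩, by simp⟩

theorem div_mul_coPlusEx_le {α : Type*} [DecidableEq α] {r : ℕ} {F : Finset (Finset α)}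
    (hr : 1 ≤ r) (hF : ∀ u v, u ≠ v → ∃ e ∈ F, u ∈ e ∧ v ∈ e) (n N : ℕ) :
    N / n * coPlusEx r n F ≤ coPlusEx r N F := by
  rcases (N / n).eq_zero_or_pos with ht | ht
  · rw [ht, zero_mul]; exact Nat.zero_le _
  rcases (coPlusEx r n F).eq_zero_or_pos with hd | hd
  · rw [hd, mul_zero]; exact Nat.zero_le _
  obtain ⟨E, hE, hne, hfree, hdE⟩ := exists_minPosCoDeg_eq_coPlusEx hr hd
  have : NeZero n := ⟨by rintro rfl; simp at ht⟩
  have hnN : n ≤ N := (Nat.div_pos_iff.1 ht).2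
  have hne' := blowUp_nonempty (ofNat_surjective_of_le hnN) hE hne
  calc N / n * coPlusEx r n F = N / n * minPosCoDeg r n E := by rw [hdE]
    _ ≤ minPosCoDeg r N (blowUp r _ E) :=
      mul_minPosCoDeg_le_minPosCoDeg_blowUp hr hE div_le_card_filter_ofNat_eq hne'
    _ ≤ coPlusEx r N F := minPosCoDeg_le_coPlusEx hr (fun e he => (mem_blowUp.1 he).1) hne'
      (not_contains_blowUp hF hE hfree)

section Graphs

open SimpleGraph

variable {β : Type*} [DecidableEq β]

def graphOf (E : Finset (Finset β)) : SimpleGraph β where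
  Adj u v := u ≠ v ∧ {u, v} ∈ E
  symm := ⟨fun u v h => ⟨h.1.symm, pair_comm u v ▸ h.2⟩⟩
  loopless := ⟨fun _ h => h.1 rfl⟩

instance (E : Finset (Finset β)) : DecidableRel (graphOf E).Adj :=
  fun u v => inferInstanceAs (Decidable (u ≠ v ∧ {u, v} ∈ E))

theorem graphOf_adj {E : Finset (Finset β)} {u v : β} :
    (graphOf E).Adj u v ↔ u ≠ v ∧ {u, v} ∈ E :=
  Iff.rfl

theorem coDeg_singleton_eq_degree {n : ℕ} {E : Finset (Finset (Fin n))}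
    (hE : ∀ e ∈ E, e.card = 2) (v : Fin n) : coDeg E {v} = (graphOf E).degree v := by
  rw [coDeg_eq_card_filter_insert fun e he => by rw [hE e he, card_singleton],
    ← card_neighborFinset_eq_degree, neighborFinset_eq_filter]
  congr 1
  ext w
  simp [graphOf_adj, pair_comm w v, eq_comm]

theorem graphOf_support_nonempty {E : Finset (Finset β)} (hE : ∀ e ∈ E, e.card = 2)
    (hne : E.Nonempty) : (graphOf E).support.Nonempty := by
  obtain ⟨e, he⟩ := hne
  obtain ⟨u, v, huv, rfl⟩ := card_eq_two.1 (hE e he)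
  exact ⟨u, v, huv, he⟩

theorem isContained_graphOf_of_contains {α : Type*} [DecidableEq α] {F : Finset (Finset α)}
    {E : Finset (Finset β)} (h : Contains F E) : graphOf F ⊑ graphOf E := by
  obtain ⟨f, hf, hfF⟩ := h
  exact ⟨⟨⟨f, fun huv => ⟨hf.ne huv.1, by simpa using hfF _ huv.2⟩⟩, hf⟩⟩

theorem contains_of_isContained_graphOf {α : Type*} [DecidableEq α] {F : Finset (Finset α)}
    (hF : ∀ e ∈ F, e.card = 2) {E : Finset (Finset β)} (h : graphOf F ⊑ graphOf E) :
    Contains F E := by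
  obtain ⟨f⟩ := h
  refine ⟨f, f.injective, fun e he => ?_⟩
  obtain ⟨u, v, huv, rfl⟩ := card_eq_two.1 (hF e he)
  simpa using (f.toHom.map_adj ⟨huv, he⟩).2

end Graphs

section Turan

open SimpleGraph

def edgeFamily {V : Type*} [Fintype V] [DecidableEq V] (G : SimpleGraph V) [DecidableRel G.Adj] :
    Finset (Finset V) :=
  {e ∈ univ.powersetCard 2 | ∀ u ∈ e, ∀ v ∈ e, u ≠ v → G.Adj u v}

variable {V : Type*} [Fintype V] [DecidableEq V] {G : SimpleGraph V} [DecidableRel G.Adj]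

theorem card_of_mem_edgeFamily {e : Finset V} (he : e ∈ edgeFamily G) : e.card = 2 :=
  (mem_powersetCard.1 (mem_filter.1 he).1).2

theorem graphOf_edgeFamily : graphOf (edgeFamily G) = G := by
  ext u v
  constructor
  · rintro ⟨huv, he⟩
    exact (mem_filter.1 he).2 u (by simp) v (by simp) huv
  · intro h
    refine ⟨h.ne, mem_filter.2 ⟨mem_powersetCard.2 ⟨subset_univ _, card_pair h.ne⟩, ?_⟩⟩
    simp only [mem_insert, mem_singleton]
    rintro a (rfl | rfl) b (rfl | rfl) hab <;> first | exact absurd rfl hab | exact h | exact h.symm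

theorem card_filter_mod_eq_le (n k c : ℕ) : #{w : Fin n | (w : ℕ) % k = c} ≤ n / k + 1 :=
  calc #{w : Fin n | (w : ℕ) % k = c} ≤ #(range (n / k + 1)) :=
        card_le_card_of_injOn (fun w : Fin n => (w : ℕ) / k)
          (fun w _ => mem_range.2 (Nat.lt_succ_of_le (Nat.div_le_div_right w.isLt.le)))
          (fun w hw w' hw' h => Fin.ext <| by
            simp only [coe_filter, mem_univ, true_and, Set.mem_ofPred_eq] at hw hw'
            rw [← Nat.mod_add_div w k, ← Nat.mod_add_div w' k, hw, hw',
              show (w : ℕ) / k = w' / k from h])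
    _ = n / k + 1 := card_range _

theorem sub_le_degree_turanGraph (n k : ℕ) (v : Fin n) :
    n - (n / k + 1) ≤ (turanGraph n k).degree v := by
  have hsplit := card_filter_add_card_filter_not (s := univ) (fun w : Fin n => (w : ℕ) % k = v % k)
  have hclass := card_filter_mod_eq_le n k (v % k)
  rw [card_univ, Fintype.card_fin] at hsplit
  rw [← card_neighborFinset_eq_degree, neighborFinset_eq_filter]
  simp only [turanGraph_adj, ne_comm (a := (v : ℕ) % k), ne_eq]
  omega

theorem turanGraph_colorable {n k : ℕ} (hk : 0 < k) : (turanGraph n k).Colorable k :=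
  ⟨Coloring.mk (fun v => ⟨v % k, Nat.mod_lt _ hk⟩) fun h => by
    simpa [Fin.ext_iff] using turanGraph_adj.1 h⟩

end Turan

section TwoGraphs

open SimpleGraph

theorem SimpleGraph.isContained_of_le_degree_of_mem_support {V W : Type*} [Fintype V]
    {G : SimpleGraph V} [DecidableRel G.Adj] {H : SimpleGraph W} {N₀ d : ℕ} {c : ℝ} (hc : 0 ≤ c)
    (hH : ∀ m ≥ N₀, ∀ {G' : SimpleGraph (Fin m)} [DecidableRel G'.Adj],
      G'.minDegree ≥ c * m → H ⊑ G')
    (hsupp : G.support.Nonempty) (hdeg : ∀ v ∈ G.support, d ≤ G.degree v)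
    (hd : c * Fintype.card V ≤ d) (hN₀ : N₀ ≤ d) : H ⊑ G := by
  classical
  obtain ⟨v₀, hv₀⟩ := hsupp
  have : Nonempty G.support := ⟨⟨v₀, hv₀⟩⟩
  have hdeg' : d ≤ (G.induce G.support).minDegree :=
    le_minDegree_of_forall_le_degree _ _ fun v =>
      (degree_induce_of_support_subset subset_rfl v).symm ▸ hdeg v v.2
  have hm : d < Fintype.card G.support :=
    hdeg'.trans_lt ((minDegree_le_degree _ ⟨v₀, hv₀⟩).trans_lt (degree_lt_card_verts _))
  let e := (G.induce G.support).overFinIso rfl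
  have hmin : ((G.induce G.support).overFin rfl).minDegree ≥ c * Fintype.card G.support := by
    rw [← e.minDegree_eq]
    calc c * Fintype.card G.support ≤ c * Fintype.card V := by
          gcongr; exact Fintype.card_subtype_le _
      _ ≤ d := hd
      _ ≤ _ := by exact_mod_cast hdeg'
  exact (hH _ (by omega) hmin).trans (e.symm.isContained.trans (Copy.induce G _).isContained)

variable {α : Type*} [DecidableEq α] {F : Finset (Finset α)} {k : ℕ}

theorem le_coPlusEx_two_add (hk : 2 ≤ k) (hF : ¬ (graphOf F).Colorable k) {n : ℕ} (hn : 2 ≤ n) :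
    n ≤ coPlusEx 2 n F + (n / k + 1) := by
  set E := edgeFamily (turanGraph n k)
  have hE : ∀ e ∈ E, e.card = 2 := fun e he => card_of_mem_edgeFamily he
  have hne : E.Nonempty := by
    have hadj : (graphOf E).Adj ⟨0, by omega⟩ ⟨1, by omega⟩ := by
      rw [graphOf_edgeFamily, turanGraph_adj]
      simp [Nat.mod_eq_of_lt (show 1 < k by omega)]
    exact ⟨_, hadj.2⟩
  have hfree : ¬ Contains F E := fun h =>
    free_of_colorable hF (turanGraph_colorable (by omega))
      (graphOf_edgeFamily (G := turanGraph n k) ▸ isContained_graphOf_of_contains h)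
  have hdeg : n - (n / k + 1) ≤ minPosCoDeg 2 n E := le_minPosCoDeg hE hne fun S hS _ => by
    obtain ⟨v, rfl⟩ := card_eq_one.1 hS
    rw [coDeg_singleton_eq_degree hE]
    convert sub_le_degree_turanGraph n k v using 2
    exact graphOf_edgeFamily
  have := minPosCoDeg_le_coPlusEx (F := F) one_le_two hE hne hfree
  omega

theorem minPosCoDeg_two_le_degree {n : ℕ} {E : Finset (Finset (Fin n))} (hE : ∀ e ∈ E, e.card = 2)
    {v : Fin n} (hv : v ∈ (graphOf E).support) : minPosCoDeg 2 n E ≤ (graphOf E).degree v := by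
  rw [← coDeg_singleton_eq_degree hE]
  refine minPosCoDeg_le_coDeg (card_singleton v) ?_
  rwa [coDeg_singleton_eq_degree hE, degree_pos_iff_mem_support]

theorem eventually_coPlusEx_two_le [Fintype α] (hF : ∀ e ∈ F, e.card = 2)
    (hcol : (graphOf F).Colorable (k + 1)) {ε : ℝ} (hε : 0 < ε) :
    ∀ᶠ n in atTop, (coPlusEx 2 n F : ℝ) ≤ (1 - 1 / k + ε) * n := by
  obtain ⟨N₀, hN₀⟩ := eventually_atTop.1 <|
    eventually_completeEquipartiteGraph_isContained_of_minDegree hε k (Fintype.card α)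
  have hFK : graphOf F ⊑ completeEquipartiteGraph (k + 1) (Fintype.card α) :=
    isContained_completeEquipartiteGraph_of_colorable hcol.some _ fun _ =>
      Fintype.card_subtype_le _
  have hc : 0 ≤ 1 - 1 / (k : ℝ) := by rw [one_div, sub_nonneg]; exact Nat.cast_inv_le_one k
  filter_upwards [(tendsto_natCast_atTop_atTop.const_mul_atTop hε).eventually_ge_atTop
    (N₀ : ℝ)] with n hn
  by_contra! hlt
  have hpos : 0 < coPlusEx 2 n F := by exact_mod_cast (by positivity : (0 : ℝ) ≤ _).trans_lt hlt
  obtain ⟨E, hE, hne, hfree, hd⟩ := exists_minPosCoDeg_eq_coPlusEx one_le_two hpos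
  refine hfree (contains_of_isContained_graphOf hF (hFK.trans ?_))
  refine isContained_of_le_degree_of_mem_support (c := 1 - 1 / k + ε) (d := minPosCoDeg 2 n E)
    (by positivity) (fun m hm G _ hG => hN₀ m hm hG) (graphOf_support_nonempty hE hne)
    (fun v hv => minPosCoDeg_two_le_degree hE hv) ?_ ?_
  · rw [Fintype.card_fin, hd]; exact hlt.le
  · have : (N₀ : ℝ) < coPlusEx 2 n F := by nlinarith
    rw [hd]; exact_mod_cast this.le

theorem tendsto_coPlusEx_two [Fintype α] (hF : ∀ e ∈ F, e.card = 2) (hk : 1 ≤ k)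
    (hcol : (graphOf F).Colorable (k + 1)) (hncol : ¬ (graphOf F).Colorable k) :
    Tendsto (fun n : ℕ => (coPlusEx 2 n F : ℝ) / n) atTop (𝓝 (1 - 1 / k)) := by
  refine tendsto_order.2 ⟨fun b hb => ?_, fun b hb => ?_⟩
  · rcases hk.eq_or_lt with rfl | hk2
    · exact Eventually.of_forall fun n => (show b < 0 by simpa using hb).trans_le (by positivity)
    have hlim : Tendsto (fun n : ℕ => 1 - 1 / (k : ℝ) - 1 / n) atTop (𝓝 (1 - 1 / k)) := by
      simpa using tendsto_const_nhds.sub (tendsto_one_div_atTop_nhds_zero_nat (𝕜 := ℝ))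
    filter_upwards [hlim.eventually (lt_mem_nhds hb), eventually_ge_atTop 2] with n hb hn
    have hle : (n : ℝ) ≤ coPlusEx 2 n F + ((n / k : ℕ) + 1) := by
      exact_mod_cast le_coPlusEx_two_add hk2 hncol hn
    have hdiv : ((n / k : ℕ) : ℝ) ≤ n / k := Nat.cast_div_le
    have hn0 : (0 : ℝ) < n := by positivity
    refine hb.trans_le ?_
    rw [le_div_iff₀ hn0]
    calc (1 - 1 / k - 1 / n) * (n : ℝ) = n - n / k - 1 := by field_simp
      _ ≤ coPlusEx 2 n F := by linarith
  · filter_upwards [eventually_coPlusEx_two_le hF hcol (half_pos (sub_pos.2 hb)),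
      eventually_gt_atTop 0] with n h hn
    have hn0 : (0 : ℝ) < n := by exact_mod_cast hn
    rw [div_lt_iff₀ hn0]
    exact h.trans_lt (by nlinarith)

theorem exists_tendsto_coPlusEx_two [Fintype α] (hF : ∀ e ∈ F, e.card = 2) (hne : F.Nonempty) :
    ∃ L : ℝ, Tendsto (fun n : ℕ => (coPlusEx 2 n F : ℝ) / n) atTop (𝓝 L) := by
  classical
  -- `Nat.find hex + 1` is the chromatic number of `graphOf F`
  have hex : ∃ k, (graphOf F).Colorable (k + 1) :=
    ⟨Fintype.card α, (colorable_of_fintype _).mono (Nat.le_succ _)⟩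
  have hk : 1 ≤ Nat.find hex := by
    by_contra! h0
    obtain ⟨e, he⟩ := hne
    obtain ⟨u, v, huv, rfl⟩ := card_eq_two.1 (hF e he)
    have hbot := colorable_one_iff.1 (Nat.lt_one_iff.1 h0 ▸ Nat.find_spec hex)
    have hadj : (graphOf F).Adj u v := ⟨huv, he⟩
    rw [hbot] at hadj
    exact hadj
  have hncol : ¬ (graphOf F).Colorable (Nat.find hex) := by
    obtain ⟨k, hk'⟩ := Nat.exists_eq_add_of_le' hk
    rw [hk']
    exact Nat.find_min hex (by omega)
  exact ⟨_, tendsto_coPlusEx_two hF hk (Nat.find_spec hex) hncol⟩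

end TwoGraphs

/-- If `F` is an `r`-graph (`r ≥ 2`) in which every `(r-1)`-set of vertices is contained
in at least one edge, then `lim co⁺ex(n,F)/n` exists. -/
theorem coPlusEx_density_exists {α : Type} [Fintype α] [DecidableEq α]
    (r : ℕ) (hr : 2 ≤ r) (F : Finset (Finset α)) (hcard : ∀ e ∈ F, e.card = r)
    (hmin : ∀ S : Finset α, S.card = r - 1 → ∃ e ∈ F, S ⊆ e) :
    ∃ L : ℝ, Filter.Tendsto (fun n : ℕ => (coPlusEx r n F : ℝ) / n)
      Filter.atTop (nhds L) := by
  rcases F.eq_empty_or_nonempty with rfl | ⟨e, he⟩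
  · refine ⟨0, tendsto_const_nhds.congr' ?_⟩
    filter_upwards [eventually_ge_atTop (Fintype.card α)] with n hn
    rw [coPlusEx_empty hn, Nat.cast_zero, zero_div]
  obtain rfl | hr3 := hr.eq_or_lt
  · exact exists_tendsto_coPlusEx_two hcard ⟨e, he⟩
  have hpair (u v : α) (huv : u ≠ v) : ∃ e ∈ F, u ∈ e ∧ v ∈ e := by
    have hαr : r ≤ Fintype.card α := hcard e he ▸ card_le_univ e
    obtain ⟨S, huvS, hS⟩ :=
      exists_superset_card_eq (s := {u, v}) (n := r - 1) (by rw [card_pair huv]; omega) (by omega)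
    obtain ⟨e', he', hSe'⟩ := hmin S hS
    exact ⟨e', he', hSe' (huvS (by simp)), hSe' (huvS (by simp))⟩
  exact exists_tendsto_div_of_div_mul_le (fun n => coPlusEx_le (by omega))
    (div_mul_coPlusEx_le (by omega) hpair)
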